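/- arXiv:1411.4835 — 4 statements merged into one kernel-verified Lean document; each statement's English description precedes it below -/
import Mathlib

section
/- Let N ∈ ℕ and let S ⊆ {1,…,N} satisfy the ballot condition. Then the set S ∪ {N+2}, viewed as a subset of {1,…,N+2}, again satisfies the ballot condition, and maj(S ∪ {N+2}) = maj(S) + (N+1). (Equivalently: the serpentine embedding i_N, which adds the entry N+1 to the first row and the entry N+2 to the second row of a standard Young tableau with at most two rows and N cells, produces a standard Young tableau with N+2 cells whose major index exceeds that of the original tableau by exactly N+1.) -/
/-- The ballot condition: `S ⊆ {1,…,N}` encodes the second row of a standard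
Young tableau with at most two rows and `N` cells iff
`2·|S ∩ {1,…,m}| ≤ m` for every `m ∈ {1,…,N}`. -/
def IsBallot (N : ℕ) (S : Finset ℕ) : Prop :=
  S ⊆ Finset.Icc 1 N ∧ ∀ m ∈ Finset.Icc 1 N, 2 * (S ∩ Finset.Icc 1 m).card ≤ m

/-- The descent set `des(S) = {i ∈ {1,…,N−1} : i ∉ S and i+1 ∈ S}`. -/
def desSet (N : ℕ) (S : Finset ℕ) : Finset ℕ :=
  (Finset.Icc 1 (N - 1)).filter fun i => i ∉ S ∧ i + 1 ∈ S

/-- The major index `maj(S) = Σ_{i ∈ des(S)} i`. -/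
def maj (N : ℕ) (S : Finset ℕ) : ℕ := ∑ i ∈ desSet N S, i

/-! Inserting `N + 2` into `S` leaves every prefix `S ∩ {1,…,m}` with `m ≤ N + 1` unchanged
and adds one element to the whole set, which the ballot inequality `2·|S| ≤ N` absorbs.
Since `N + 1 ∉ S`, the only new descent is `N + 1`. -/

open Finset

theorem isBallot_iff_forall {N : ℕ} {S : Finset ℕ} :
    IsBallot N S ↔ S ⊆ Icc 1 N ∧ ∀ m, 2 * (S ∩ Icc 1 m).card ≤ m := by
  refine ⟨fun ⟨hsub, hbal⟩ => ⟨hsub, fun m => ?_⟩,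
    fun ⟨hsub, hbal⟩ => ⟨hsub, fun m _ => hbal m⟩⟩
  rcases Nat.eq_zero_or_pos m with rfl | hm
  · simp
  rcases le_or_gt m N with hmN | hNm
  · exact hbal m (mem_Icc.mpr ⟨hm, hmN⟩)
  have hstable : S ∩ Icc 1 m = S ∩ Icc 1 N := by
    rw [inter_eq_left.mpr hsub, inter_eq_left.mpr (hsub.trans (Icc_subset_Icc_right hNm.le))]
  rcases Nat.eq_zero_or_pos N with rfl | hN
  · simp [hstable]
  · exact hstable ▸ (hbal N (mem_Icc.mpr ⟨hN, le_rfl⟩)).trans hNm.le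

theorem IsBallot.two_mul_card_le {N : ℕ} {S : Finset ℕ} (hS : IsBallot N S) :
    2 * S.card ≤ N := by
  obtain ⟨hsub, hbal⟩ := isBallot_iff_forall.mp hS
  simpa [inter_eq_left.mpr hsub] using hbal N

theorem IsBallot.insert_of_lt {N a : ℕ} {S : Finset ℕ} (hS : IsBallot N S) (hNa : N ≤ a)
    (hcard : 2 * (S.card + 1) ≤ a) : IsBallot a (insert a S) := by
  obtain ⟨hsub, hbal⟩ := isBallot_iff_forall.mp hS
  refine isBallot_iff_forall.mpr ⟨insert_subset (mem_Icc.mpr ⟨by omega, le_rfl⟩)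
    (hsub.trans (Icc_subset_Icc_right hNa)), fun m => ?_⟩
  rcases lt_or_ge m a with hma | ham
  · rw [insert_inter_of_notMem (by simp; omega)]
    exact hbal m
  · calc 2 * (insert a S ∩ Icc 1 m).card
        ≤ 2 * (S.card + 1) := by
          gcongr; exact (card_le_card inter_subset_left).trans (card_insert_le a S)
      _ ≤ m := hcard.trans ham

theorem desSet_insert_add_two {N : ℕ} {S : Finset ℕ} (hS : ∀ x ∈ S, x ≤ N) :
    desSet (N + 2) (insert (N + 2) S) = insert (N + 1) (desSet N S) := by
  ext i
  have := hS (N + 1)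
  simp only [desSet, mem_filter, mem_Icc, mem_insert]
  grind

theorem maj_insert_add_two {N : ℕ} {S : Finset ℕ} (hS : ∀ x ∈ S, x ≤ N) :
    maj (N + 2) (insert (N + 2) S) = maj N S + (N + 1) := by
  have hnew : N + 1 ∉ desSet N S := by simp [desSet]
  rw [maj, desSet_insert_add_two hS, sum_insert hnew, maj, add_comm]

/-- The serpentine embedding `i_N` (adding entry `N+1` to the first row and
`N+2` to the second row) maps ballot sets to ballot sets and increases the
major index by exactly `N+1`. -/
theorem serpentine_embedding_maj (N : ℕ) (S : Finset ℕ) (hS : IsBallot N S) :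
    IsBallot (N + 2) (S ∪ {N + 2}) ∧
      maj (N + 2) (S ∪ {N + 2}) = maj N S + (N + 1) := by
  have hbound : ∀ x ∈ S, x ≤ N := fun x hx => (mem_Icc.mp (hS.1 hx)).2
  rw [union_comm, ← insert_eq]
  exact ⟨hS.insert_of_lt (by omega) (by have := hS.two_mul_card_le; omega),
    maj_insert_add_two hbound⟩
end

section
/- For every n ∈ ℕ and every S ⊆ {1,…,2n} satisfying the ballot condition, maj(S) ≤ n²; moreover equality maj(S) = n² holds if and only if S = {2, 4, …, 2n}. (Equivalently: the stable major index of every serpentine tableau is a nonnegative integer, and at each finite level the maximal major index n² among all two-row standard Young tableaux with 2n cells is attained only by the truncated principal tableau [τ_0]_{2n}.) -/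
def odds (n : ℕ) : Finset ℕ := (Finset.range n).image fun j => 2 * j + 1

lemma mem_odds {n i : ℕ} : i ∈ odds n ↔ i % 2 = 1 ∧ i < 2 * n := by
  simp only [odds, Finset.mem_image, Finset.mem_range]
  constructor
  · rintro ⟨j, hj, rfl⟩
    omega
  · intro h
    exact ⟨i / 2, by omega, by omega⟩

lemma odds_succ (n : ℕ) : odds (n + 1) = insert (2 * n + 1) (odds n) := by
  simp only [odds, Finset.range_add_one, Finset.image_insert]

lemma sum_le_sum_erase_add (D : Finset ℕ) (a : ℕ) : ∑ i ∈ D, i ≤ ∑ i ∈ D.erase a, i + a := by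
  by_cases ha : a ∈ D
  · rw [Finset.sum_erase_add _ _ ha]
  · rw [Finset.erase_eq_of_notMem ha]
    omega

lemma subset_range_of_notMem {D : Finset ℕ} {m : ℕ} (hD : D ⊆ Finset.range (m + 1))
    (hm : m ∉ D) : D ⊆ Finset.range m := fun i hi =>
  Finset.mem_range.mpr (lt_of_le_of_ne (Nat.lt_succ_iff.mp (Finset.mem_range.mp (hD hi)))
    (by rintro rfl; exact hm hi))

/-- Peel off the top pair `{2n, 2n+1}`: it contributes at most `2n+1`, and exactly that only when
`2n+1 ∈ D`, which forces `2n ∉ D`. -/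
theorem sum_le_sq_and_eq_sq_iff {n : ℕ} {D : Finset ℕ} (hD : D ⊆ Finset.range (2 * n))
    (hsucc : ∀ i ∈ D, i + 1 ∉ D) : ∑ i ∈ D, i ≤ n ^ 2 ∧ (∑ i ∈ D, i = n ^ 2 ↔ D = odds n) := by
  induction n generalizing D with
  | zero =>
    obtain rfl : D = ∅ := Finset.subset_empty.mp hD
    exact ⟨le_rfl, by simp [odds]⟩
  | succ n ih =>
    have hsucc_erase (a : ℕ) : ∀ i ∈ D.erase a, i + 1 ∉ D.erase a :=
      fun i hi hi' => hsucc i (Finset.mem_of_mem_erase hi) (Finset.mem_of_mem_erase hi')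
    have hsq : (n + 1) ^ 2 = n ^ 2 + (2 * n + 1) := by ring
    by_cases htop : 2 * n + 1 ∈ D
    · have hsub : D.erase (2 * n + 1) ⊆ Finset.range (2 * n) := by
        refine subset_range_of_notMem (subset_range_of_notMem ?_ (Finset.notMem_erase _ _)) ?_
        · exact (Finset.erase_subset _ _).trans hD
        · exact fun h => hsucc _ (Finset.mem_of_mem_erase h) htop
      obtain ⟨hle, heq⟩ := ih hsub (hsucc_erase _)
      have hsum : ∑ i ∈ D, i = ∑ i ∈ D.erase (2 * n + 1), i + (2 * n + 1) :=
        (Finset.sum_erase_add _ _ htop).symm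
      have hodds : D = odds (n + 1) ↔ D.erase (2 * n + 1) = odds n := by
        constructor
        · rintro rfl
          rw [odds_succ, Finset.erase_insert (by simp [mem_odds])]
        · intro h
          rw [← Finset.insert_erase htop, h, odds_succ]
      rw [hodds, ← heq, hsum, hsq]
      omega
    · have hsub : D.erase (2 * n) ⊆ Finset.range (2 * n) :=
        subset_range_of_notMem ((Finset.erase_subset _ _).trans (subset_range_of_notMem hD htop))
          (Finset.notMem_erase _ _)
      have hle := (ih hsub (hsucc_erase _)).1
      have hlt : ∑ i ∈ D, i < (n + 1) ^ 2 := by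
        linarith [sum_le_sum_erase_add D (2 * n)]
      refine ⟨hlt.le, iff_of_false hlt.ne fun h => htop ?_⟩
      rw [h, mem_odds]
      omega

lemma mem_desSet {N : ℕ} {S : Finset ℕ} {i : ℕ} :
    i ∈ desSet N S ↔ 1 ≤ i ∧ i ≤ N - 1 ∧ i ∉ S ∧ i + 1 ∈ S := by
  simp only [desSet, Finset.mem_filter, Finset.mem_Icc, and_assoc]

lemma desSet_subset_range (N : ℕ) (S : Finset ℕ) : desSet N S ⊆ Finset.range N := fun i hi => by
  have := mem_desSet.mp hi
  exact Finset.mem_range.mpr (by omega)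

lemma succ_notMem_desSet {N : ℕ} {S : Finset ℕ} : ∀ i ∈ desSet N S, i + 1 ∉ desSet N S :=
  fun _ hi hi' => (mem_desSet.mp hi').2.2.1 (mem_desSet.mp hi).2.2.2

lemma mem_image_two_mul_Icc {n x : ℕ} :
    x ∈ (Finset.Icc 1 n).image (fun j => 2 * j) ↔ x % 2 = 0 ∧ 1 ≤ x ∧ x ≤ 2 * n := by
  simp only [Finset.mem_image, Finset.mem_Icc]
  constructor
  · rintro ⟨j, hj, rfl⟩
    omega
  · intro h
    exact ⟨x / 2, by omega, by omega⟩

lemma desSet_eq_odds_iff {n : ℕ} {S : Finset ℕ} (hS : S ⊆ Finset.Icc 1 (2 * n)) :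
    desSet (2 * n) S = odds n ↔ S = (Finset.Icc 1 n).image fun j => 2 * j := by
  simp only [Finset.ext_iff, mem_desSet, mem_odds, mem_image_two_mul_Icc]
  constructor
  · intro h x
    constructor
    · intro hx
      have hx' := Finset.mem_Icc.mp (hS hx)
      refine ⟨?_, hx'⟩
      by_contra hodd
      exact ((h x).mpr ⟨by omega, by omega⟩).2.2.1 hx
    · intro hx
      have := ((h (x - 1)).mpr (by omega)).2.2.2
      rwa [Nat.sub_add_cancel hx.2.1] at this
  · intro h i
    rw [h, h]
    omega

/-- For every ballot set `S ⊆ {1,…,2n}` one has `maj(S) ≤ n²`, with equality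
iff `S = {2, 4, …, 2n}` (the encoding of the truncated principal tableau
`[τ_0]_{2n}`).  Hence the stable major index of every serpentine tableau is a
nonnegative integer. -/
theorem maj_le_sq (n : ℕ) (S : Finset ℕ) (hS : IsBallot (2 * n) S) :
    maj (2 * n) S ≤ n ^ 2 ∧
      (maj (2 * n) S = n ^ 2 ↔ S = (Finset.Icc 1 n).image fun j => 2 * j) := by
  rw [maj, ← desSet_eq_odds_iff hS.1]
  exact sum_le_sq_and_eq_sq_iff (desSet_subset_range _ _) succ_notMem_desSet
end

section
/- Let N ∈ ℕ and let S ⊆ {1,…,N} satisfy the ballot condition. Define the column of an entry j ∈ {1,…,N} by col(j) = |S ∩ {1,…,j}| if j ∈ S, and col(j) = j − |S ∩ {1,…,j}| if j ∉ S. Then for every i ∈ {1,…,N−1} exactly one of the following two alternatives holds: either i ∈ des(S) (i.e., i+1 lies in a lower row than i), or col(i+1) > col(i) (i.e., i+1 lies strictly to the right of i). Consequently, defining the charge c(S) = Σ_{i ∈ {1,…,N−1}, col(i+1) > col(i)} i, one has maj(S) + c(S) = N(N−1)/2. -/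
/-- The column of the entry `j` in the two-row standard tableau encoded by
`S`: it is `|S ∩ {1,…,j}|` if `j` lies in the second row (`j ∈ S`), and
`j − |S ∩ {1,…,j}|` if `j` lies in the first row. -/
def col (S : Finset ℕ) (j : ℕ) : ℕ :=
  if j ∈ S then (S ∩ Finset.Icc 1 j).card else j - (S ∩ Finset.Icc 1 j).card

/-!
Write `r j = |S ∩ {1,…,j}|` for the number of second-row entries up to `j`. Comparing
`col i` and `col (i+1)` in the four cases for the rows of `i` and `i+1`, the entry `i+1`
fails to lie to the right of `i` exactly when `i` is in the first row and `i+1` in the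
second: then `col (i+1) = r i + 1 ≤ i - r i = col i` by the ballot condition at `i+1`
(when `i` is in the second row and `i+1` in the first, the ballot condition at `i` gives
the strict inequality instead). So the charge set is the complement of the descent set in
`{1,…,N−1}`, and `maj S + c S` is the sum of `1,…,N−1`.
-/

open Finset

theorem card_inter_Icc_one_succ (S : Finset ℕ) (i : ℕ) :
    (S ∩ Icc 1 (i + 1)).card = (S ∩ Icc 1 i).card + if i + 1 ∈ S then 1 else 0 := by
  have hIcc : Icc 1 (i + 1) = insert (i + 1) (Icc 1 i) := by
    ext x; simp only [mem_Icc, mem_insert]; omega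
  have hfresh : i + 1 ∉ S ∩ Icc 1 i := by simp
  split_ifs with h
  · rw [hIcc, inter_insert_of_mem h, card_insert_of_notMem hfresh]
  · rw [hIcc, inter_insert_of_notMem h, add_zero]

theorem col_lt_col_succ_iff {S : Finset ℕ} {i : ℕ} (hi : 2 * (S ∩ Icc 1 i).card ≤ i)
    (hi' : 2 * (S ∩ Icc 1 (i + 1)).card ≤ i + 1) :
    col S i < col S (i + 1) ↔ ¬(i ∉ S ∧ i + 1 ∈ S) := by
  rw [card_inter_Icc_one_succ] at hi'
  unfold col
  rw [card_inter_Icc_one_succ]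
  by_cases h : i ∈ S <;> by_cases h' : i + 1 ∈ S <;> simp [h, h'] at hi' ⊢ <;> omega

theorem mem_desSet_iff {N : ℕ} {S : Finset ℕ} {i : ℕ} (hi : i ∈ Icc 1 (N - 1)) :
    i ∈ desSet N S ↔ i ∉ S ∧ i + 1 ∈ S := by
  simp [desSet, hi]

theorem desSet_subset (N : ℕ) (S : Finset ℕ) : desSet N S ⊆ Icc 1 (N - 1) :=
  filter_subset _ _

theorem IsBallot.col_lt_col_succ_iff_notMem_desSet {N : ℕ} {S : Finset ℕ} (hS : IsBallot N S)
    {i : ℕ} (hi : i ∈ Icc 1 (N - 1)) : col S i < col S (i + 1) ↔ i ∉ desSet N S := by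
  obtain ⟨hi₁, hiN⟩ := mem_Icc.mp hi
  rw [mem_desSet_iff hi]
  exact col_lt_col_succ_iff (hS.2 i (mem_Icc.mpr ⟨hi₁, by omega⟩))
    (hS.2 (i + 1) (mem_Icc.mpr ⟨by omega, by omega⟩))

theorem IsBallot.filter_col_lt_col_succ {N : ℕ} {S : Finset ℕ} (hS : IsBallot N S) :
    (Icc 1 (N - 1)).filter (fun i => col S i < col S (i + 1)) = Icc 1 (N - 1) \ desSet N S := by
  rw [sdiff_eq_filter]
  exact filter_congr fun i hi => hS.col_lt_col_succ_iff_notMem_desSet hi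

theorem sum_Icc_one_sub_one_id (N : ℕ) : ∑ i ∈ Icc 1 (N - 1), i = N * (N - 1) / 2 := by
  rw [← sum_range_id]
  rcases N with _ | n
  · rfl
  · rw [range_eq_Ico, sum_eq_sum_Ico_succ_bot n.succ_pos]
    simp [Ico_add_one_right_eq_Icc]

/-- For a ballot set `S ⊆ {1,…,N}` and every `i ∈ {1,…,N−1}`, exactly one of
the two alternatives holds: either `i ∈ des(S)` (the entry `i+1` lies in a
lower row than `i`), or `col(i+1) > col(i)` (the entry `i+1` lies strictly to
the right of `i`).  Consequently, the charge
`c(S) = Σ_{i : col(i+1) > col(i)} i` satisfies `maj(S) + c(S) = N(N−1)/2`. -/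
theorem maj_add_charge (N : ℕ) (S : Finset ℕ) (hS : IsBallot N S) :
    (∀ i ∈ Finset.Icc 1 (N - 1), Xor' (i ∈ desSet N S) (col S i < col S (i + 1))) ∧
      maj N S + ∑ i ∈ (Finset.Icc 1 (N - 1)).filter (fun i => col S i < col S (i + 1)), i =
        N * (N - 1) / 2 := by
  refine ⟨fun i hi => ?_, ?_⟩
  · rw [hS.col_lt_col_succ_iff_notMem_desSet hi]
    exact xor_not_right.mpr Iff.rfl
  · rw [hS.filter_col_lt_col_succ, maj, add_comm, sum_sdiff (desSet_subset N S),
      sum_Icc_one_sub_one_id]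
end

section
/- Fix n ≥ 1 and set N = 2n. For a, b ∈ {1,2}, define a map j_{a,b} on subsets of {1,…,N} by j_{a,b}(S) = S ∪ A ∪ B ⊆ {1,…,N+2}, where A = {N+1} if a = 2 and A = ∅ if a = 1, and B = {N+2} if b = 2 and B = ∅ if b = 1 (i.e., the new entries N+1 and N+2 are placed in rows a and b, respectively, of the corresponding two-row tableau). Suppose that for every S ⊆ {1,…,N} satisfying the ballot condition, the set j_{a,b}(S) satisfies the ballot condition in {1,…,N+2} and maj(j_{a,b}(S)) = maj(S) + (N+1). Then (a,b) = (1,2), i.e., j_{a,b} is the serpentine embedding i_N. (This is the uniqueness assertion: the serpentine embedding is the unique row-placement embedding of two-row standard tableaux that shifts the major index by N+1, equivalently that preserves the stable major index r.) -/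
/-
Only the empty tableau is needed. Its image `j_{a,b}(∅)` lies in `{N+1, N+2}`, so its descents lie
in `{N, N+1}`; without the descent `N+1` the major index is at most `N`. Hence the shift `N+1`
forces the descent `N+1`, i.e. `N+1 ∉ j_{a,b}(∅)` and `N+2 ∈ j_{a,b}(∅)`, which says `a = 1`, `b = 2`.
-/

open Finset

lemma isBallot_empty (N : ℕ) : IsBallot N ∅ :=
  ⟨empty_subset _, fun m _ => by simp⟩

lemma desSet_subset_of_subset_Icc {k M : ℕ} {S : Finset ℕ} (hS : S ⊆ Icc (k + 1) M) :
    desSet M S ⊆ Icc k (M - 1) := by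
  intro i hi
  simp only [desSet, mem_filter, mem_Icc] at hi
  have := mem_Icc.1 (hS hi.2.2)
  simp only [mem_Icc]
  omega

lemma mem_desSet_of_maj_eq_succ {N : ℕ} {T : Finset ℕ} (hT : T ⊆ Icc (N + 1) (N + 2))
    (hmaj : maj (N + 2) T = N + 1) : N + 1 ∈ desSet (N + 2) T := by
  by_contra hdes
  have hsub : desSet (N + 2) T ⊆ {N} := by
    intro i hi
    have := mem_Icc.1 (desSet_subset_of_subset_Icc hT hi)
    rw [mem_singleton]
    by_contra
    exact hdes (by convert hi using 1; omega)
  have hle : maj (N + 2) T ≤ N := by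
    simpa [maj] using sum_le_sum_of_subset (f := id) hsub
  omega

theorem serpentine_embedding_unique_general (n : ℕ) (a b : ℕ)
    (ha : a ∈ ({1, 2} : Finset ℕ))
    (h : ∀ S : Finset ℕ, IsBallot (2 * n) S →
      IsBallot (2 * n + 2)
          (S ∪ (if a = 2 then {2 * n + 1} else ∅) ∪ (if b = 2 then {2 * n + 2} else ∅)) ∧
        maj (2 * n + 2)
            (S ∪ (if a = 2 then {2 * n + 1} else ∅) ∪ (if b = 2 then {2 * n + 2} else ∅)) =
          maj (2 * n) S + (2 * n + 1)) :
    a = 1 ∧ b = 2 := by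
  set T : Finset ℕ := ∅ ∪ (if a = 2 then {2 * n + 1} else ∅) ∪ (if b = 2 then {2 * n + 2} else ∅)
  have hT : T ⊆ Icc (2 * n + 1) (2 * n + 2) := by
    refine union_subset (union_subset (empty_subset _) ?_) ?_ <;> split_ifs <;> simp
  have hmaj : maj (2 * n + 2) T = 2 * n + 1 :=
    (h ∅ (isBallot_empty _)).2.trans (by simp [maj, desSet])
  have hdes := mem_desSet_of_maj_eq_succ hT hmaj
  simp only [desSet, mem_filter, T, empty_union, mem_union] at hdes
  simp only [mem_insert, mem_singleton] at ha
  split_ifs at hdes <;> simp_all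

/-- Uniqueness of the serpentine embedding: if a row-placement embedding
`j_{a,b}` (placing the new entry `N+1` in row `a` and `N+2` in row `b`, where
`a, b ∈ {1,2}` and row 2 membership means joining the encoding set) sends every
ballot set `S ⊆ {1,…,N}` (with `N = 2n`) to a ballot set in `{1,…,N+2}` while
shifting the major index by exactly `N+1` (equivalently, preserving the stable
major index `r`), then `(a,b) = (1,2)`, i.e. `j_{a,b}` is the serpentine
embedding `i_N`. -/
theorem serpentine_embedding_unique (n : ℕ) (hn : 1 ≤ n) (a b : ℕ)
    (ha : a ∈ ({1, 2} : Finset ℕ)) (hb : b ∈ ({1, 2} : Finset ℕ))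
    (h : ∀ S : Finset ℕ, IsBallot (2 * n) S →
      IsBallot (2 * n + 2)
          (S ∪ (if a = 2 then {2 * n + 1} else ∅) ∪ (if b = 2 then {2 * n + 2} else ∅)) ∧
        maj (2 * n + 2)
            (S ∪ (if a = 2 then {2 * n + 1} else ∅) ∪ (if b = 2 then {2 * n + 2} else ∅)) =
          maj (2 * n) S + (2 * n + 1)) :
    a = 1 ∧ b = 2 :=
  serpentine_embedding_unique_general n a b ha h
end
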